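/- Let S be a Noetherian domain with quotient field K and let 𝔟_• be a graded family of nonzero ideals in S such that the k-th Veronese subalgebra ℛ^{[k]}(𝔟_•) of the Rees algebra is a standard graded S-algebra. Then v̂(𝔟_•) = v(𝔟_k)/k for any valuation v of K supported on S. In particular, v̂(𝔟_•) > 0 if and only if v(𝔟_k) > 0. -/
import Mathlib


open Filter Polynomial
open scoped ENNReal NNReal

set_option synthInstance.maxHeartbeats 1000000
set_option maxHeartbeats 1000000

universe u

section Preamble

variable {S : Type u} [CommRing S]

/-- A graded family of ideals: `a 0 = S` and `a p * a q ⊆ a (p + q)` for all `p, q`. -/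
def GradedFamily (a : ℕ → Ideal S) : Prop :=
  a 0 = ⊤ ∧ ∀ p q : ℕ, a p * a q ≤ a (p + q)

/-- A filtration of ideals: a graded family which is descending. -/
def IdealFiltration (a : ℕ → Ideal S) : Prop :=
  GradedFamily a ∧ ∀ p : ℕ, a (p + 1) ≤ a p

/-- The integral closure of an ideal `I`: the ideal of all elements `x` satisfying an
equation of integral dependence `x ^ n + c 1 * x ^ (n - 1) + ⋯ + c n = 0` with `c i ∈ I ^ i`. -/
noncomputable def intClosure (I : Ideal S) : Ideal S :=
  Ideal.span {x : S | ∃ n : ℕ, 0 < n ∧ ∃ c : ℕ → S,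
    (∀ i, 1 ≤ i → i ≤ n → c i ∈ I ^ i) ∧
    x ^ n + ∑ i ∈ Finset.Icc 1 n, c i * x ^ (n - i) = 0}

/-- The resurgence `ρ(a, b) = sup { s / r : ¬ a s ⊆ b r }` (as an extended real number,
with `sSup ∅ = ⊥`). -/
noncomputable def resurgence (a b : ℕ → Ideal S) : EReal :=
  sSup {x : EReal | ∃ s r : ℕ, 0 < s ∧ 0 < r ∧ ¬ a s ≤ b r ∧
    x = (((s : ℝ) / (r : ℝ) : ℝ) : EReal)}

/-- The asymptotic resurgence `ρ̂(a, b) = sup { s / r : ¬ a (s*t) ⊆ b (r*t) for all t ≫ 1}`. -/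
noncomputable def asympResurgence (a b : ℕ → Ideal S) : EReal :=
  sSup {x : EReal | ∃ s r : ℕ, 0 < s ∧ 0 < r ∧
    (∀ᶠ t : ℕ in atTop, ¬ a (s * t) ≤ b (r * t)) ∧
    x = (((s : ℝ) / (r : ℝ) : ℝ) : EReal)}

/-- The `k`-th Veronese subalgebra of the Rees algebra of the graded family `b` is a
standard graded `S`-algebra, i.e. `b (k*n) = (b k) ^ n` for all `n ≥ 1`. -/
def StdVeronese (b : ℕ → Ideal S) (k : ℕ) : Prop :=
  ∀ n : ℕ, 1 ≤ n → b (k * n) = b k ^ n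

/-- The Rees algebra `ℛ(b) = ⊕ₙ bₙ tⁿ ⊆ S[t]` of a graded family, as a set of polynomials. -/
def ReesSet (b : ℕ → Ideal S) : Set (Polynomial S) :=
  {p : Polynomial S | ∀ n : ℕ, p.coeff n ∈ b n}

/-- `ℛ(b')` is a finitely generated `ℛ(b)`-module: there is a finite set `G ⊆ ℛ(b')`
such that every element of `ℛ(b')` is an `ℛ(b)`-linear combination of elements of `G`. -/
def ReesFGModule (b b' : ℕ → Ideal S) : Prop :=
  ∃ G : Finset (Polynomial S), (G : Set (Polynomial S)) ⊆ ReesSet b' ∧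
    ∀ p ∈ ReesSet b', ∃ c : Polynomial S → Polynomial S,
      (∀ g ∈ G, c g ∈ ReesSet b) ∧ p = ∑ g ∈ G, c g * g

/-- A graded family `b` is `bb`-equivalent (for an ideal `bb`) if for some `k`,
`b (i + k) ⊆ bb ^ i ⊆ b i` for all `i ≥ 1`. -/
def BEquivalent (bb : Ideal S) (b : ℕ → Ideal S) : Prop :=
  ∃ k : ℕ, ∀ i : ℕ, 1 ≤ i → b (i + k) ≤ bb ^ i ∧ bb ^ i ≤ b i

/-- `β_n(a, b) = inf { d ≥ 1 : ¬ a n ⊆ b d }`, with `inf ∅ = ∞`. -/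
noncomputable def betaIdx (a b : ℕ → Ideal S) (n : ℕ) : ℕ∞ :=
  sInf {d : ℕ∞ | ∃ m : ℕ, 0 < m ∧ ¬ a n ≤ b m ∧ d = (m : ℕ∞)}

/-- `ρ^n(a, b) = sup { s / β_s(a, b) : s ≥ n, β_s(a, b) < ∞ }`. -/
noncomputable def rhoN (a b : ℕ → Ideal S) (n : ℕ) : EReal :=
  sSup {x : EReal | ∃ s d : ℕ, n ≤ s ∧ 0 < s ∧ betaIdx a b s = (d : ℕ∞) ∧
    x = (((s : ℝ) / (d : ℝ) : ℝ) : EReal)}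

/-- `ρ^lim(a, b) = lim_{n → ∞} ρ^n(a, b)`, the limit of the nonincreasing sequence `ρ^n`,
i.e. its infimum. -/
noncomputable def rhoLim (a b : ℕ → Ideal S) : EReal :=
  ⨅ n : ℕ, rhoN a b n

end Preamble

section Valuations

variable {S : Type u} [CommRing S] [IsDomain S]

/-- A (discrete) valuation of the quotient field `K` of `S`: a function `v : K → ℤ` with
`v (x * y) = v x + v y` and `v (x + y) ≥ min (v x) (v y)` (for nonzero elements). -/
structure ValuationOn (S : Type u) [CommRing S] [IsDomain S] where
  v : FractionRing S → ℤ
  map_mul : ∀ x y : FractionRing S, x ≠ 0 → y ≠ 0 → v (x * y) = v x + v y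
  min_le_map_add : ∀ x y : FractionRing S, x ≠ 0 → y ≠ 0 → x + y ≠ 0 →
    min (v x) (v y) ≤ v (x + y)

/-- A valuation of the quotient field is supported on `S` if it is nonnegative on `S`. -/
def ValuationOn.Supported (w : ValuationOn S) : Prop :=
  ∀ x : S, x ≠ 0 → 0 ≤ w.v (algebraMap S (FractionRing S) x)

/-- `v(I) = min { v x : x ∈ I, x ≠ 0 }`. -/
noncomputable def idealVal (w : ValuationOn S) (I : Ideal S) : ℤ :=
  sInf {m : ℤ | ∃ x ∈ I, x ≠ 0 ∧ w.v (algebraMap S (FractionRing S) x) = m}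

/-- The skew Waldschmidt constant `v̂(a) = inf_{n ≥ 1} v(a n) / n (= lim_{n → ∞} v(a n)/n)`. -/
noncomputable def skewWald (w : ValuationOn S) (a : ℕ → Ideal S) : ℝ :=
  sInf {t : ℝ | ∃ n : ℕ, 0 < n ∧ t = (idealVal w (a n) : ℝ) / (n : ℝ)}

/-- `β_n^v(a, b) = inf { d ≥ 1 : v(a n) < v(b d) }`, with `inf ∅ = ∞`. -/
noncomputable def betaVal (w : ValuationOn S) (a b : ℕ → Ideal S) (n : ℕ) : ℕ∞ :=
  sInf {d : ℕ∞ | ∃ m : ℕ, 0 < m ∧ idealVal w (a n) < idealVal w (b m) ∧ d = (m : ℕ∞)}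

end Valuations

section Domains

/-- `S` is a finitely generated algebra over a field. -/
structure FieldBase (S : Type u) [CommRing S] where
  F : Type u
  [fld : Field F]
  [alg : Algebra F S]
  fg : Algebra.FiniteType F S

/-- `S` is finitely generated over a Noetherian integrally closed domain `R` with the
property that every finitely generated `R`-algebra (domain) has module-finite integral
closure (in its fraction field). -/
structure NagataBase (S : Type u) [CommRing S] where
  R : Type u
  [cring : CommRing R]
  [dom : IsDomain R]
  [noeth : IsNoetherianRing R]
  [intClosed : IsIntegrallyClosed R]
  [alg : Algebra R S]
  fg : Algebra.FiniteType R S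
  finiteIntegralClosure : ∀ (A : Type u) [CommRing A] [IsDomain A] [Algebra R A],
    Algebra.FiniteType R A → Module.Finite A (integralClosure A (FractionRing A))

/-- `S` is a complete local Noetherian ring, or finitely generated over a field or over `ℤ`,
or, more generally, finitely generated over a Noetherian integrally closed domain `R` such
that every finitely generated `R`-algebra has a module-finite integral closure. -/
def AdmissibleDomain (S : Type u) [CommRing S] : Prop :=
  (IsNoetherianRing S ∧ ∃ m : Ideal S, m.IsMaximal ∧ (∀ I : Ideal S, I.IsMaximal → I = m) ∧
    IsAdicComplete m S)
  ∨ Nonempty (FieldBase S) ∨ Algebra.FiniteType ℤ S ∨ Nonempty (NagataBase S)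

end Domains

section AuxVal

variable {S : Type u} [CommRing S] [IsDomain S]

private lemma algebraMap_ne_zero' {x : S} (hx : x ≠ 0) :
    algebraMap S (FractionRing S) x ≠ 0 := by
  rw [Ne, map_eq_zero_iff _ (IsFractionRing.injective S (FractionRing S))]
  exact hx

private lemma idealVal_bddBelow (w : ValuationOn S) (hw : w.Supported) (I : Ideal S) :
    BddBelow {m : ℤ | ∃ x ∈ I, x ≠ 0 ∧ w.v (algebraMap S (FractionRing S) x) = m} :=
  ⟨0, fun m ⟨x, _, hx, hm⟩ => hm ▸ hw x hx⟩

private lemma idealVal_nonempty {I : Ideal S} (hI : I ≠ ⊥) (w : ValuationOn S) :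
    {m : ℤ | ∃ x ∈ I, x ≠ 0 ∧ w.v (algebraMap S (FractionRing S) x) = m}.Nonempty := by
  obtain ⟨x, hxI, hx⟩ := Submodule.exists_mem_ne_zero_of_ne_bot hI
  exact ⟨_, x, hxI, hx, rfl⟩

private lemma idealVal_mem (w : ValuationOn S) (hw : w.Supported) {I : Ideal S} (hI : I ≠ ⊥) :
    ∃ x ∈ I, x ≠ 0 ∧ w.v (algebraMap S (FractionRing S) x) = idealVal w I :=
  Int.csInf_mem (idealVal_nonempty hI w) (idealVal_bddBelow w hw I)

private lemma idealVal_le (w : ValuationOn S) (hw : w.Supported) {I : Ideal S} {x : S}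
    (hxI : x ∈ I) (hx : x ≠ 0) :
    idealVal w I ≤ w.v (algebraMap S (FractionRing S) x) :=
  csInf_le (idealVal_bddBelow w hw I) ⟨x, hxI, hx, rfl⟩

private lemma le_idealVal (w : ValuationOn S) {I : Ideal S} {c : ℤ}
    (h : ∀ x ∈ I, x ≠ 0 → c ≤ w.v (algebraMap S (FractionRing S) x)) (hI : I ≠ ⊥) :
    c ≤ idealVal w I :=
  le_csInf (idealVal_nonempty hI w) (fun m ⟨x, hxI, hx, hm⟩ => hm ▸ h x hxI hx)

private lemma idealVal_mono (w : ValuationOn S) (hw : w.Supported) {I J : Ideal S}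
    (hIJ : I ≤ J) (hI : I ≠ ⊥) : idealVal w J ≤ idealVal w I := by
  obtain ⟨x, hxI, hx, hv⟩ := idealVal_mem w hw hI
  exact hv ▸ idealVal_le w hw (hIJ hxI) hx

private lemma val_add_cases (w : ValuationOn S) (c : ℤ) (a b : S)
    (ha : a = 0 ∨ c ≤ w.v (algebraMap S (FractionRing S) a))
    (hb : b = 0 ∨ c ≤ w.v (algebraMap S (FractionRing S) b)) :
    a + b = 0 ∨ c ≤ w.v (algebraMap S (FractionRing S) (a + b)) := by
  by_cases ha0 : a = 0
  · simpa [ha0] using hb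
  by_cases hb0 : b = 0
  · simpa [hb0] using ha
  have hva := ha.resolve_left ha0
  have hvb := hb.resolve_left hb0
  by_cases hab : a + b = 0
  · exact Or.inl hab
  right
  have h3 := w.min_le_map_add (algebraMap S (FractionRing S) a)
    (algebraMap S (FractionRing S) b) (algebraMap_ne_zero' ha0) (algebraMap_ne_zero' hb0)
    (by rw [← map_add]; exact algebraMap_ne_zero' hab)
  rw [map_add]
  exact le_trans (le_min hva hvb) h3

private lemma idealVal_mul (w : ValuationOn S) (hw : w.Supported) {I J : Ideal S}
    (hI : I ≠ ⊥) (hJ : J ≠ ⊥) :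
    idealVal w (I * J) = idealVal w I + idealVal w J := by
  obtain ⟨x, hxI, hx, hvx⟩ := idealVal_mem w hw hI
  obtain ⟨y, hyJ, hy, hvy⟩ := idealVal_mem w hw hJ
  have hIJ : I * J ≠ ⊥ := by
    intro h
    have hmem : x * y ∈ I * J := Ideal.mul_mem_mul hxI hyJ
    rw [h, Ideal.mem_bot] at hmem
    exact (mul_ne_zero hx hy) hmem
  apply le_antisymm
  · have hxy : x * y ≠ 0 := mul_ne_zero hx hy
    have h1 := idealVal_le w hw (Ideal.mul_mem_mul hxI hyJ) hxy
    rwa [map_mul, w.map_mul _ _ (algebraMap_ne_zero' hx) (algebraMap_ne_zero' hy),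
      hvx, hvy] at h1
  · apply le_idealVal w _ hIJ
    intro z hz hznz
    set c := idealVal w I + idealVal w J with hc
    have key : z = 0 ∨ c ≤ w.v (algebraMap S (FractionRing S) z) := by
      refine Submodule.mul_induction_on hz ?_ (val_add_cases w c)
      intro m hm n hn
      by_cases hm0 : m = 0
      · exact Or.inl (by rw [hm0, zero_mul])
      by_cases hn0 : n = 0
      · exact Or.inl (by rw [hn0, mul_zero])
      right
      rw [map_mul, w.map_mul _ _ (algebraMap_ne_zero' hm0) (algebraMap_ne_zero' hn0)]
      exact add_le_add (idealVal_le w hw hm hm0) (idealVal_le w hw hn hn0)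
    exact key.resolve_left hznz

private lemma Ideal.pow_ne_bot {I : Ideal S} (hI : I ≠ ⊥) (n : ℕ) : I ^ n ≠ ⊥ := by
  obtain ⟨x, hxI, hx⟩ := Submodule.exists_mem_ne_zero_of_ne_bot hI
  intro h
  have hmem : x ^ n ∈ I ^ n := Ideal.pow_mem_pow hxI n
  rw [h, Ideal.mem_bot] at hmem
  exact pow_ne_zero n hx hmem

private lemma idealVal_pow (w : ValuationOn S) (hw : w.Supported) {I : Ideal S}
    (hI : I ≠ ⊥) : ∀ n : ℕ, 1 ≤ n → idealVal w (I ^ n) = n * idealVal w I := by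
  intro n hn
  induction n with
  | zero => omega
  | succ m ih =>
    rcases Nat.eq_or_lt_of_le hn with h | h
    · simp [← h]
    · have hm : 1 ≤ m := by omega
      rw [pow_succ, idealVal_mul w hw (Ideal.pow_ne_bot hI m) hI, ih hm]
      push_cast
      ring

private lemma gradedFamily_pow_le {b : ℕ → Ideal S} (hb : GradedFamily b) (n : ℕ) :
    ∀ j : ℕ, 1 ≤ j → b n ^ j ≤ b (n * j) := by
  intro j hj
  induction j with
  | zero => omega
  | succ m ih =>
    rcases Nat.eq_or_lt_of_le hj with h | h
    · simp [← h]
    · have hm : 1 ≤ m := by omega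
      calc b n ^ (m + 1) = b n ^ m * b n := pow_succ _ _
        _ ≤ b (n * m) * b n := Ideal.mul_mono_left (ih hm)
        _ ≤ b (n * m + n) := hb.2 _ _
        _ = b (n * (m + 1)) := by ring_nf

end AuxVal

/-- **Lemma.** If the `k`-th Veronese subalgebra of the Rees algebra of `b` is a standard
graded `S`-algebra, then `v̂(b) = v(b k)/k` for any valuation `v` of the quotient field of `S`
supported on `S`. In particular, `v̂(b) > 0` if and only if `v(b k) > 0`. -/
theorem statement1 {S : Type u} [CommRing S] [IsDomain S] [IsNoetherianRing S]
    (b : ℕ → Ideal S) (hb : GradedFamily b) (hbnz : ∀ i : ℕ, 1 ≤ i → b i ≠ ⊥)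
    (k : ℕ) (hk : 0 < k) (hst : StdVeronese b k)
    (w : ValuationOn S) (hw : w.Supported) :
    skewWald w b = (idealVal w (b k) : ℝ) / (k : ℝ) ∧
      (0 < skewWald w b ↔ 0 < idealVal w (b k)) := by
  set A := idealVal w (b k) with hA
  have hcross : ∀ n : ℕ, 0 < n → (n : ℤ) * A ≤ (k : ℤ) * idealVal w (b n) := by
    intro n hn
    have h1 : b n ^ k ≤ b (n * k) := gradedFamily_pow_le hb n k hk
    have h2 : idealVal w (b (n * k)) ≤ idealVal w (b n ^ k) :=
      idealVal_mono w hw h1 (Ideal.pow_ne_bot (hbnz n hn) k)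
    rw [idealVal_pow w hw (hbnz n hn) k hk, show n * k = k * n from mul_comm n k,
      hst n hn, idealVal_pow w hw (hbnz k hk) n hn] at h2
    exact h2
  have hkR : (0 : ℝ) < (k : ℝ) := by positivity
  set T := {t : ℝ | ∃ n : ℕ, 0 < n ∧ t = (idealVal w (b n) : ℝ) / (n : ℝ)} with hT
  have hmemT : ((A : ℝ) / (k : ℝ)) ∈ T := ⟨k, hk, rfl⟩
  have hbound : ∀ t ∈ T, (A : ℝ) / (k : ℝ) ≤ t := by
    rintro t ⟨n, hn, rfl⟩
    have hnR : (0 : ℝ) < (n : ℝ) := by positivity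
    rw [div_le_div_iff₀ hkR hnR]
    have := hcross n hn
    have h2 : ((n : ℤ) * A : ℤ) ≤ ((k : ℤ) * idealVal w (b n) : ℤ) := this
    have h3 : ((n : ℝ)) * (A : ℝ) ≤ ((k : ℝ)) * (idealVal w (b n) : ℝ) := by
      exact_mod_cast h2
    linarith
  have heq : skewWald w b = (A : ℝ) / (k : ℝ) := by
    apply le_antisymm
    · exact csInf_le ⟨(A : ℝ) / (k : ℝ), hbound⟩ hmemT
    · exact le_csInf ⟨_, hmemT⟩ hbound
  refine ⟨heq, ?_⟩
  rw [heq]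
  constructor
  · intro h
    by_contra h'
    push_neg at h'
    have hA0 : (A : ℝ) ≤ 0 := by exact_mod_cast h'
    have : (A : ℝ) / (k : ℝ) ≤ 0 := div_nonpos_of_nonpos_of_nonneg hA0 (le_of_lt hkR)
    linarith
  · intro h
    exact div_pos (by exact_mod_cast h) hkR
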